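/- arXiv:1809.05171 — 2 statements merged into one kernel-verified Lean document; each statement's English description precedes it below -/
import Mathlib

section
/- Let X be a finite set, let p : X → ℝ be a probability distribution on X (p(x) ≥ 0 for all x and ∑_{x∈X} p(x) = 1), let t ≥ 1 be a natural number and ε ≥ 0. Suppose there exists a probability distribution q : X → ℝ on X whose support has cardinality at most t and which satisfies ∑_{x∈X} |p(x) − q(x)| ≤ ε. Let S = {x ∈ X : p(x) > ε/t}. Then ∑_{x ∉ S} p(x) ≤ 2ε. -/
open Finset
open scoped Classical

/-!
Split the points where `p x ≤ ε / t` according to whether `q` vanishes there. At most `t` of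
them lie in the support of `q`, so they carry mass at most `t · ε / t = ε`; off the support of
`q`, `p x = |p x - q x|`, so the remaining mass is at most `∑ |p - q| ≤ ε`.
-/

section

variable {X : Type*} [Fintype X]

lemma sum_filter_eq_zero_le_sum_abs_sub (p q : X → ℝ) (s : Finset X) :
    ∑ x ∈ s with q x = 0, p x ≤ ∑ x, |p x - q x| :=
  calc ∑ x ∈ s with q x = 0, p x
      ≤ ∑ x ∈ s with q x = 0, |p x - q x| :=
        sum_le_sum fun x hx => by rw [(mem_filter.mp hx).2, sub_zero]; exact le_abs_self _
    _ ≤ ∑ x, |p x - q x| :=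
        sum_le_sum_of_subset_of_nonneg (subset_univ _) fun _ _ _ => abs_nonneg _

lemma sum_filter_le_le_card_support_mul_add_sum_abs_sub (p q : X → ℝ) {c : ℝ} (hc : 0 ≤ c) :
    ∑ x with p x ≤ c, p x ≤ #{x | q x ≠ 0} * c + ∑ x, |p x - q x| := by
  rw [← sum_filter_not_add_sum_filter _ (fun x => q x = 0)]
  gcongr
  · have hcard : #{x ∈ {x | p x ≤ c} | ¬q x = 0} ≤ #{x | q x ≠ 0} :=
      card_le_card fun x hx => by simp_all
    calc ∑ x ∈ {x ∈ {x | p x ≤ c} | ¬q x = 0}, p x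
        ≤ #{x ∈ {x | p x ≤ c} | ¬q x = 0} • c :=
          sum_le_card_nsmul _ _ _ fun x hx => (mem_filter.mp (mem_filter.mp hx).1).2
      _ ≤ #{x | q x ≠ 0} * c := by rw [nsmul_eq_mul]; gcongr
  · exact sum_filter_eq_zero_le_sum_abs_sub p q _

lemma card_mul_div_le {n t : ℕ} (hnt : n ≤ t) {ε : ℝ} (hε : 0 ≤ ε) : (n : ℝ) * (ε / t) ≤ ε := by
  rcases Nat.eq_zero_or_pos t with rfl | ht
  · simpa using hε
  calc (n : ℝ) * (ε / t) ≤ t * (ε / t) := by gcongr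
    _ = ε := mul_div_cancel₀ ε (by positivity)

end

theorem stmt_0_general {X : Type*} [Fintype X] (p : X → ℝ)
    (t : ℕ) (ε : ℝ)
    (hsparse : ∃ q : X → ℝ, (∀ x, 0 ≤ q x) ∧ (∑ x, q x = 1) ∧
      (Finset.univ.filter fun x => q x ≠ 0).card ≤ t ∧ (∑ x, |p x - q x| ≤ ε)) :
    ∑ x ∈ Finset.univ.filter (fun x => ¬ (ε / t < p x)), p x ≤ 2 * ε := by
  obtain ⟨q, -, -, hqcard, hqdist⟩ := hsparse
  have hε : 0 ≤ ε := (sum_nonneg fun x _ => abs_nonneg (p x - q x)).trans hqdist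
  simp only [not_lt]
  calc ∑ x with p x ≤ ε / t, p x
      ≤ #{x | q x ≠ 0} * (ε / t) + ∑ x, |p x - q x| :=
        sum_filter_le_le_card_support_mul_add_sum_abs_sub p q (by positivity)
    _ ≤ ε + ε := add_le_add (card_mul_div_le hqcard hε) hqdist
    _ = 2 * ε := by ring

/-- Technical sparsity lemma (Lemma 5 / Lemma from Kushilevitz–Mansour):
if `p` is a probability distribution on a finite set `X`, `q` is a `t`-sparse probability
distribution with `∑ |p - q| ≤ ε`, and `S = {x | p x > ε / t}`, then the total mass of `p`
outside `S` is at most `2ε`. -/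
theorem stmt_0 {X : Type*} [Fintype X] (p : X → ℝ)
    (hp0 : ∀ x, 0 ≤ p x) (hp1 : ∑ x, p x = 1)
    (t : ℕ) (ht : 1 ≤ t) (ε : ℝ) (hε : 0 ≤ ε)
    (hsparse : ∃ q : X → ℝ, (∀ x, 0 ≤ q x) ∧ (∑ x, q x = 1) ∧
      (Finset.univ.filter fun x => q x ≠ 0).card ≤ t ∧ (∑ x, |p x - q x| ≤ ε)) :
    ∑ x ∈ Finset.univ.filter (fun x => ¬ (ε / t < p x)), p x ≤ 2 * ε :=
  stmt_0_general p t ε hsparse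
end

section
/- Let X be a finite set, let p : X → ℝ be a probability distribution on X, let t ≥ 1 be a natural number and ε ≥ 0, and suppose p is ε-approximately t-sparse. Let L ⊆ X be a proper subset of X containing every x with p(x) > ε/t. Let p̃ : X → ℝ be any function such that ∑_{x∈L} |p̃(x) − p(x)| ≤ ε and such that p̃ is constant on X ∖ L with value p̃_∘ = (1 − ∑_{x∈L} p̃(x)) / |X ∖ L|. Then ∑_{x∈X} |p̃(x) − p(x)| ≤ 6ε. -/
/-!
Let `S = X ∖ L`. Every point of `S` has mass at most `ε / t`, so the mass of `p` on `S` is at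
most `2ε`: on the support of a `t`-sparse `q` that is `ε`-close to `p` there are at most `t`
such points, and off it `p` is bounded by `|p - q|`. Since `p̃` is flat on `S` with total mass
`1 - ∑_L p̃ = ∑_L (p - p̃) + ∑_S p`, its `ℓ1` error on `S` is at most
`|∑_L (p - p̃)| + 2 ∑_S p`.
Adding the error `ε` on `L` gives `ε + (ε + 2ε) + 2ε = 6ε`.
-/

open Finset
open scoped Classical

lemma sum_le_sum_abs_sub_add_card_support_mul {X : Type*} [Fintype X]
    {p q : X → ℝ} (hp : ∀ x, 0 ≤ p x) {S : Finset X} {δ : ℝ} (hδ : 0 ≤ δ)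
    (hpS : ∀ x ∈ S, p x ≤ δ) :
    ∑ x ∈ S, p x ≤ ∑ x, |p x - q x| + #(univ.filter fun x => q x ≠ 0) * δ := by
  rw [← sum_filter_add_sum_filter_not S (fun x => q x = 0)]
  gcongr ?_ + ?_
  · calc ∑ x ∈ S.filter (fun x => q x = 0), p x
        = ∑ x ∈ S.filter (fun x => q x = 0), |p x - q x| := by
          refine sum_congr rfl fun x hx => ?_
          rw [(mem_filter.mp hx).2, sub_zero, abs_of_nonneg (hp x)]
      _ ≤ ∑ x, |p x - q x| :=
          sum_le_sum_of_subset_of_nonneg (subset_univ _) fun x _ _ => abs_nonneg _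
  · calc ∑ x ∈ S.filter (fun x => ¬q x = 0), p x
        ≤ #(S.filter fun x => ¬q x = 0) • δ :=
          sum_le_card_nsmul _ _ _ fun x hx => hpS x (mem_filter.mp hx).1
      _ ≤ #(univ.filter fun x => q x ≠ 0) * δ := by
          rw [nsmul_eq_mul]
          gcongr
          exact subset_univ S

lemma natCast_mul_div_le (n : ℕ) {a : ℝ} (ha : 0 ≤ a) : n * (a / n) ≤ a := by
  rcases eq_or_ne (n : ℝ) 0 with hn | hn
  · simpa [hn] using ha
  · rw [mul_div_cancel₀ a hn]

lemma sum_abs_sub_le_of_eq_div_card {X : Type*} {s : Finset X} {f g : X → ℝ} {a : ℝ}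
    (hf : ∀ x ∈ s, f x = a / #s) (hg : ∀ x ∈ s, 0 ≤ g x) :
    ∑ x ∈ s, |f x - g x| ≤ |a| + ∑ x ∈ s, g x := by
  calc ∑ x ∈ s, |f x - g x|
      ≤ ∑ x ∈ s, (|a / #s| + g x) := sum_le_sum fun x hx => by
        rw [hf x hx]
        exact (abs_sub _ _).trans_eq (by rw [abs_of_nonneg (hg x hx)])
    _ = #s * (|a| / #s) + ∑ x ∈ s, g x := by
        rw [sum_add_distrib, sum_const, nsmul_eq_mul, abs_div, Nat.abs_cast]
    _ ≤ |a| + ∑ x ∈ s, g x := by grw [natCast_mul_div_le _ (abs_nonneg a)]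

theorem stmt_1_general {X : Type*} [Fintype X] (p : X → ℝ)
    (hp0 : ∀ x, 0 ≤ p x) (hp1 : ∑ x, p x = 1)
    (t : ℕ) (ε : ℝ) (hε : 0 ≤ ε)
    (hsparse : ∃ q : X → ℝ, (∀ x, 0 ≤ q x) ∧ (∑ x, q x = 1) ∧
      (Finset.univ.filter fun x => q x ≠ 0).card ≤ t ∧ (∑ x, |p x - q x| ≤ ε))
    (L : Finset X)
    (hcover : ∀ x, ε / t < p x → x ∈ L)
    (ptilde : X → ℝ)
    (hin : ∑ x ∈ L, |ptilde x - p x| ≤ ε)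
    (hout : ∀ x ∉ L,
      ptilde x = (1 - ∑ y ∈ L, ptilde y) / ((Finset.univ \ L).card : ℝ)) :
    ∑ x, |ptilde x - p x| ≤ 6 * ε := by
  obtain ⟨q, -, -, hq_supp, hpq⟩ := hsparse
  have hp_out : ∑ x ∈ univ \ L, p x ≤ 2 * ε := by
    have hsmall : ∀ x ∈ univ \ L, p x ≤ ε / t := fun x hx =>
      not_lt.mp fun h => (mem_sdiff.mp hx).2 (hcover x h)
    calc ∑ x ∈ univ \ L, p x
        ≤ ∑ x, |p x - q x| + #(univ.filter fun x => q x ≠ 0) * (ε / t) :=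
          sum_le_sum_abs_sub_add_card_support_mul hp0 (by positivity) hsmall
      _ ≤ ε + t * (ε / t) := by gcongr
      _ ≤ 2 * ε := by linarith [natCast_mul_div_le t hε]
  have hmass :
      1 - ∑ y ∈ L, ptilde y = ∑ x ∈ L, (p x - ptilde x) + ∑ x ∈ univ \ L, p x := by
    rw [← hp1, ← sum_sdiff (subset_univ L), sum_sub_distrib]
    ring
  have hmass_le : |1 - ∑ y ∈ L, ptilde y| ≤ ε + 2 * ε := by
    rw [hmass]
    refine (abs_add_le _ _).trans (add_le_add ?_ ?_)
    · exact (abs_sum_le_sum_abs _ _).trans (by simpa only [abs_sub_comm] using hin)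
    · rwa [abs_of_nonneg (sum_nonneg fun x _ => hp0 x)]
  have hflat : ∑ x ∈ univ \ L, |ptilde x - p x| ≤
      |1 - ∑ y ∈ L, ptilde y| + ∑ x ∈ univ \ L, p x :=
    sum_abs_sub_le_of_eq_div_card (fun x hx => hout x (mem_sdiff.mp hx).2) fun x _ => hp0 x
  rw [← sum_sdiff (subset_univ L)]
  linarith

/-- if `p` is an `ε`-approximately `t`-sparse probability distribution,
`L` is a proper subset of `X` containing every `x` with `p x > ε / t`, and `p̃` agrees with
`p` on `L` up to total `ℓ1` error `ε` while being uniformly flat outside `L` with the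
normalizing constant value, then `‖p̃ - p‖₁ ≤ 6 ε`. -/
theorem stmt_1 {X : Type*} [Fintype X] (p : X → ℝ)
    (hp0 : ∀ x, 0 ≤ p x) (hp1 : ∑ x, p x = 1)
    (t : ℕ) (ht : 1 ≤ t) (ε : ℝ) (hε : 0 ≤ ε)
    (hsparse : ∃ q : X → ℝ, (∀ x, 0 ≤ q x) ∧ (∑ x, q x = 1) ∧
      (Finset.univ.filter fun x => q x ≠ 0).card ≤ t ∧ (∑ x, |p x - q x| ≤ ε))
    (L : Finset X) (hL : L ⊂ Finset.univ)
    (hcover : ∀ x, ε / t < p x → x ∈ L)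
    (ptilde : X → ℝ)
    (hin : ∑ x ∈ L, |ptilde x - p x| ≤ ε)
    (hout : ∀ x ∉ L,
      ptilde x = (1 - ∑ y ∈ L, ptilde y) / ((Finset.univ \ L).card : ℝ)) :
    ∑ x, |ptilde x - p x| ≤ 6 * ε :=
  stmt_1_general p hp0 hp1 t ε hε hsparse L hcover ptilde hin hout
end
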